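/- Let x ∈ E_d, r ∈ ℝ₊^d, and let s be the smallest solution of the system (r, x). If u ∈ [0,∞]^d is such that Σ_{j=1}^d x^{i,j}(u_j−) ≤ −r_i for all i ∈ [d]_u, then u ≥ s. Consequently, for every u ∈ ℝ₊^d with u < s (i.e. u ≤ s and u ≠ s), there exists i ∈ [d] such that Σ_{j=1}^d x^{i,j}(u_j−) > −r_i. -/

import Mathlib

open Filter Topology Set
open scoped ENNReal

noncomputable section

/-- The value of `f` "at `t⁻`" for an extended time `t ∈ [0,∞]`, as an extended real number:
at `t = 0` it is `f 0` (convention `f(0-) = f(0)`), at `t = ∞` it is the limit (limsup) of `f`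
at infinity, and at a finite `t > 0` it is the left limit of `f` at `t`. -/
def preLimE (f : ℝ → ℝ) (t : ℝ≥0∞) : EReal :=
  if t = 0 then (f 0 : EReal)
  else if t = ⊤ then Filter.limsup (fun s : ℝ => (f s : EReal)) Filter.atTop
  else ((Function.leftLim f t.toReal : ℝ) : EReal)

/-- The family `x = (x^{i,j})_{i,j ∈ [d]}` of real functions on `ℝ₊` belongs to the class
`E_d`: each `x i j` is càdlàg on `ℝ₊` with `x i j 0 = 0`, each diagonal entry `x i i` is
downward skip free (no negative jumps), and each off-diagonal entry is nondecreasing. -/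
structure MemE (d : ℕ) (x : Fin d → Fin d → ℝ → ℝ) : Prop where
  zero : ∀ i j, x i j 0 = 0
  rightCont : ∀ i j, ∀ t : ℝ, 0 ≤ t → ContinuousWithinAt (x i j) (Set.Ici t) t
  leftLimEx : ∀ i j, ∀ t : ℝ, 0 < t →
    ∃ l : ℝ, Filter.Tendsto (x i j) (nhdsWithin t (Set.Iio t)) (nhds l)
  skipFree : ∀ i, ∀ t : ℝ, 0 < t → Function.leftLim (x i i) t ≤ x i i t
  mono : ∀ i j, i ≠ j → MonotoneOn (x i j) (Set.Ici 0)

/-- `s ∈ [0,∞]^d` is a solution of the system `(r, x)`: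
`r i + ∑_j x^{i,j}(s_j−) = 0` for every coordinate `i` with `s i < ∞`
(the equality being required in the extended reals, hence implicitly the sum is finite). -/
def IsSolution (d : ℕ) (x : Fin d → Fin d → ℝ → ℝ) (r : Fin d → ℝ)
    (s : Fin d → ℝ≥0∞) : Prop :=
  ∀ i, s i ≠ ⊤ → (r i : EReal) + ∑ j, preLimE (x i j) (s j) = 0


/-- `s` is the smallest solution of the system `(r, x)`: it is a solution and every
solution `t` satisfies `s ≤ t` coordinatewise. -/
def IsSmallestSolution (d : ℕ) (x : Fin d → Fin d → ℝ → ℝ) (r : Fin d → ℝ)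
    (s : Fin d → ℝ≥0∞) : Prop :=
  IsSolution d x r s ∧ ∀ t : Fin d → ℝ≥0∞, IsSolution d x r t → s ≤ t

/-!
Row `i` of the system pins the diagonal term `x^{i,i}(s_i−)` to the level
`−r_i − ∑_{j≠i} x^{i,j}(s_j−)`, which is nonpositive and antitone in `s`. Sending `v` to the
first passage times of the diagonal terms below these levels is therefore a monotone self-map `Γ`
of the complete lattice `[0,∞]^d`, and a subsolution `u` satisfies `Γ u ≤ u`, so the least fixed
point of `Γ` lies below `u`. Since `x^{i,i}` starts at `0`, is right-continuous and has no
negative jumps, its left limit at a finite first passage time equals the level exactly; hence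
fixed points of `Γ` are solutions, and the smallest solution lies below the least fixed point.
The second claim is the contrapositive of the first.
-/

open Function

theorem ContinuousWithinAt.tendsto_leftLim_nhdsGT {α β : Type*} [LinearOrder α]
    [TopologicalSpace α] [OrderTopology α] [TopologicalSpace β] [T3Space β] {f : α → β}
    {a : α} (h : ContinuousWithinAt f (Ici a) a) :
    Tendsto (leftLim f) (𝓝[>] a) (𝓝 (f a)) := by
  refine (closed_nhds_basis (f a)).tendsto_right_iff.2 fun s ⟨hs, hsc⟩ => ?_
  rcases eq_or_neBot (𝓝[>] a) with h' | h'
  · simp [h']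
  obtain ⟨b, hb⟩ : (Ioi a).Nonempty := Filter.nonempty_of_mem (self_mem_nhdsWithin (a := a))
  obtain ⟨u, hau, hu⟩ := (mem_nhdsGE_iff_exists_Ico_subset' hb).1 (h hs)
  filter_upwards [Ioo_mem_nhdsGT hau] with c hc
  have hfc : f c ∈ s := hu ⟨hc.1.le, hc.2⟩
  rcases eq_or_neBot (𝓝[<] c) with h'c | h'c
  · rwa [leftLim_eq_of_eq_bot _ h'c]
  by_cases! hlim : ¬ ∃ y, Tendsto f (𝓝[<] c) (𝓝 y)
  · rwa [leftLim_eq_of_not_tendsto _ hlim]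
  refine hsc.mem_of_tendsto (tendsto_leftLim_of_tendsto hlim) ?_
  filter_upwards [Ioo_mem_nhdsLT hc.1] with e he using hu ⟨he.1.le, he.2.trans hc.2⟩

section preLimE

variable {f : ℝ → ℝ}

lemma preLimE_zero : preLimE f 0 = (f 0 : EReal) := if_pos rfl

lemma preLimE_top : preLimE f ⊤ = limsup (fun s => (f s : EReal)) atTop := by
  simp [preLimE]

lemma preLimE_of_ne_zero_of_ne_top {t : ℝ≥0∞} (h0 : t ≠ 0) (ht : t ≠ ⊤) :
    preLimE f t = ((leftLim f t.toReal : ℝ) : EReal) := by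
  simp [preLimE, h0, ht]

lemma preLimE_ofReal {t : ℝ} (ht : 0 < t) :
    preLimE f (ENNReal.ofReal t) = ((leftLim f t : ℝ) : EReal) := by
  rw [preLimE_of_ne_zero_of_ne_top (by simpa using ht) ENNReal.ofReal_ne_top,
    ENNReal.toReal_ofReal ht.le]

lemma exists_preLimE_eq_coe {t : ℝ≥0∞} (ht : t ≠ ⊤) :
    ∃ c : ℝ, preLimE f t = c := by
  rcases eq_or_ne t 0 with rfl | h0
  · exact ⟨f 0, preLimE_zero⟩
  · exact ⟨_, preLimE_of_ne_zero_of_ne_top h0 ht⟩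

lemma preLimE_le_of_leftLim_le (hsf : ∀ t, 0 < t → leftLim f t ≤ f t) {t : ℝ≥0∞}
    (ht : t ≠ ⊤) : preLimE f t ≤ f t.toReal := by
  rcases eq_or_ne t 0 with rfl | h0
  · simp [preLimE_zero]
  · rw [preLimE_of_ne_zero_of_ne_top h0 ht]
    exact_mod_cast hsf _ (ENNReal.toReal_pos h0 ht)

lemma le_preLimE_of_monotoneOn (hf : MonotoneOn f (Ici 0))
    (hll : ∀ t, 0 < t → ∃ l, Tendsto f (𝓝[<] t) (𝓝 l)) {a : ℝ} (ha : 0 ≤ a) {t : ℝ≥0∞}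
    (hat : ENNReal.ofReal a < t) : (f a : EReal) ≤ preLimE f t := by
  rcases eq_or_ne t ⊤ with rfl | ht
  · rw [preLimE_top]
    refine le_limsup_of_frequently_le (Eventually.frequently ?_) ?_
    · filter_upwards [eventually_ge_atTop a] with s hs
      exact_mod_cast hf ha (ha.trans hs) hs
    · isBoundedDefault
  · have hat' : a < t.toReal := (ENNReal.ofReal_lt_iff_lt_toReal ha ht).1 hat
    rw [preLimE_of_ne_zero_of_ne_top (pos_of_gt hat).ne' ht]
    refine EReal.coe_le_coe_iff.2 <|
      ge_of_tendsto (tendsto_leftLim_of_tendsto (hll _ (ha.trans_lt hat'))) ?_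
    filter_upwards [Ioo_mem_nhdsLT hat'] with s hs
    exact hf ha (ha.trans hs.1.le) hs.1.le

lemma monotone_preLimE (hf : MonotoneOn f (Ici 0))
    (hll : ∀ t, 0 < t → ∃ l, Tendsto f (𝓝[<] t) (𝓝 l)) : Monotone (preLimE f) := by
  intro a b hab
  rcases hab.eq_or_lt with rfl | hlt
  · rfl
  have ha : a ≠ ⊤ := hlt.ne_top
  have hsf : ∀ t, 0 < t → leftLim f t ≤ f t := fun t ht =>
    le_of_tendsto (tendsto_leftLim_of_tendsto (hll t ht)) <| by
      filter_upwards [Ioo_mem_nhdsLT ht] with s hs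
      exact hf hs.1.le ht.le hs.2.le
  calc preLimE f a ≤ f a.toReal := preLimE_le_of_leftLim_le hsf ha
    _ ≤ preLimE f b :=
      le_preLimE_of_monotoneOn hf hll ENNReal.toReal_nonneg (by rwa [ENNReal.ofReal_toReal ha])

end preLimE

def firstPassage (f : ℝ → ℝ) (L : EReal) : ℝ≥0∞ :=
  sInf {t | preLimE f t ≤ L}

lemma antitone_firstPassage (f : ℝ → ℝ) : Antitone (firstPassage f) :=
  fun _ _ hL => sInf_le_sInf fun _ ht => le_trans ht hL

section firstPassage

variable {f : ℝ → ℝ} (hrc : ∀ t, 0 ≤ t → ContinuousWithinAt f (Ici t) t) {L : EReal}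
include hrc

lemma preLimE_firstPassage_le (hsf : ∀ t, 0 < t → leftLim f t ≤ f t)
    (hT : firstPassage f L ≠ ⊤) : preLimE f (firstPassage f L) ≤ L := by
  set T := firstPassage f L
  by_cases hTS : preLimE f T ≤ L
  · exact hTS
  have hfreq : ∃ᶠ t in 𝓝[>] T.toReal, ((leftLim f t : ℝ) : EReal) ≤ L := by
    refine frequently_iff.2 fun hU => ?_
    obtain ⟨u, hTu, hu⟩ := mem_nhdsGT_iff_exists_Ioo_subset.1 hU
    obtain ⟨t, htS, htu⟩ := sInf_lt_iff.1 ((ENNReal.lt_ofReal_iff_toReal_lt hT).2 hTu)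
    have hTt : T < t := (sInf_le htS).lt_of_ne (by rintro rfl; exact hTS htS)
    have ht : t ≠ ⊤ := htu.ne_top
    refine ⟨t.toReal, hu ⟨(ENNReal.toReal_lt_toReal hT ht).2 hTt, ?_⟩, ?_⟩
    · exact (ENNReal.lt_ofReal_iff_toReal_lt ht).1 htu
    · rwa [← preLimE_of_ne_zero_of_ne_top (pos_of_gt hTt).ne' ht]
  calc preLimE f T ≤ f T.toReal := preLimE_le_of_leftLim_le hsf hT
    _ ≤ L := le_of_tendsto_of_frequently ((continuous_coe_real_ereal.tendsto _).comp
        (hrc _ ENNReal.toReal_nonneg).tendsto_leftLim_nhdsGT) hfreq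

lemma le_preLimE_firstPassage (hll : ∀ t, 0 < t → ∃ l, Tendsto f (𝓝[<] t) (𝓝 l))
    (hf0 : f 0 = 0) (hL : L ≤ 0) (hT : firstPassage f L ≠ ⊤) :
    L ≤ preLimE f (firstPassage f L) := by
  set T := firstPassage f L
  have hbefore : ∀ a, 0 ≤ a → a < T.toReal → L ≤ f a := by
    intro a ha haT
    by_contra! hfa
    have hev : ∀ᶠ t in 𝓝[>] a, ((leftLim f t : ℝ) : EReal) < L :=
      ((continuous_coe_real_ereal.tendsto _).comp
        (hrc a ha).tendsto_leftLim_nhdsGT).eventually (gt_mem_nhds hfa)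
    obtain ⟨t, hlt, hat, htT⟩ := (hev.and (Ioo_mem_nhdsGT haT)).exists
    have hTt : T ≤ ENNReal.ofReal t := by
      refine sInf_le (show preLimE f _ ≤ L from ?_)
      rw [preLimE_ofReal (ha.trans_lt hat)]
      exact hlt.le
    exact htT.not_ge ((ENNReal.le_ofReal_iff_toReal_le hT (ha.trans hat.le)).1 hTt)
  rcases eq_or_ne T 0 with h0 | h0
  · rwa [h0, preLimE_zero, hf0]
  have hτ : 0 < T.toReal := ENNReal.toReal_pos h0 hT
  rw [preLimE_of_ne_zero_of_ne_top h0 hT]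
  refine ge_of_tendsto ((continuous_coe_real_ereal.tendsto _).comp
    (tendsto_leftLim_of_tendsto (hll _ hτ))) ?_
  filter_upwards [Ioo_mem_nhdsLT hτ] with a ha using hbefore a ha.1.le ha.2

end firstPassage

namespace MemE

variable {d : ℕ} {x : Fin d → Fin d → ℝ → ℝ} (hx : MemE d x)
include hx

lemma monotone_preLimE {i j : Fin d} (hij : i ≠ j) : Monotone (preLimE (x i j)) :=
  _root_.monotone_preLimE (hx.mono i j hij) (hx.leftLimEx i j)

lemma preLimE_nonneg {i j : Fin d} (hij : i ≠ j) (t : ℝ≥0∞) : 0 ≤ preLimE (x i j) t := by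
  simpa [preLimE_zero, hx.zero i j] using hx.monotone_preLimE hij (zero_le (a := t))

lemma preLimE_firstPassage_eq (i : Fin d) {L : EReal} (hL : L ≤ 0)
    (hT : firstPassage (x i i) L ≠ ⊤) : preLimE (x i i) (firstPassage (x i i) L) = L :=
  le_antisymm (preLimE_firstPassage_le (hx.rightCont i i) (hx.skipFree i) hT)
    (le_preLimE_firstPassage (hx.rightCont i i) (hx.leftLimEx i i) (hx.zero i i) hL hT)

end MemE

section System

variable {d : ℕ} {x : Fin d → Fin d → ℝ → ℝ} {r : Fin d → ℝ}

def offDiagSum (x : Fin d → Fin d → ℝ → ℝ) (i : Fin d) (v : Fin d → ℝ≥0∞) : EReal :=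
  ∑ j ∈ Finset.univ.erase i, preLimE (x i j) (v j)

def level (x : Fin d → Fin d → ℝ → ℝ) (r : Fin d → ℝ) (i : Fin d) (v : Fin d → ℝ≥0∞) :
    EReal :=
  ((-(r i) : ℝ) : EReal) - offDiagSum x i v

lemma sum_preLimE_eq_add_offDiagSum (i : Fin d) (v : Fin d → ℝ≥0∞) :
    ∑ j, preLimE (x i j) (v j) = preLimE (x i i) (v i) + offDiagSum x i v :=
  (Finset.add_sum_erase _ _ (Finset.mem_univ i)).symm

lemma le_level_iff {i : Fin d} {v : Fin d → ℝ≥0∞} {a : EReal} :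
    a ≤ level x r i v ↔ a + offDiagSum x i v ≤ ((-(r i) : ℝ) : EReal) :=
  EReal.le_sub_iff_add_le (.inr (EReal.coe_ne_bot _)) (.inr (EReal.coe_ne_top _))

lemma level_le_coe_iff {i : Fin d} {v : Fin d → ℝ≥0∞} {c : ℝ} :
    level x r i v ≤ c ↔ ((-(r i) : ℝ) : EReal) ≤ c + offDiagSum x i v :=
  EReal.sub_le_iff_le_add (.inr (EReal.coe_ne_top _)) (.inr (EReal.coe_ne_bot _))

lemma MemE.antitone_level (hx : MemE d x) (r : Fin d → ℝ) (i : Fin d) :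
    Antitone (level x r i) := fun _ _ h =>
  EReal.sub_le_sub le_rfl <| Finset.sum_le_sum fun j hj =>
    hx.monotone_preLimE (Finset.ne_of_mem_erase hj).symm (h j)

lemma MemE.level_nonpos (hx : MemE d x) (hr : ∀ i, 0 ≤ r i) (i : Fin d)
    (v : Fin d → ℝ≥0∞) : level x r i v ≤ 0 :=
  calc level x r i v ≤ ((-(r i) : ℝ) : EReal) - 0 :=
        EReal.sub_le_sub le_rfl <| Finset.sum_nonneg fun j hj =>
          hx.preLimE_nonneg (Finset.ne_of_mem_erase hj).symm (v j)
    _ ≤ 0 := by rw [sub_zero]; exact_mod_cast neg_nonpos.2 (hr i)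

def passageTimeMap (hx : MemE d x) (r : Fin d → ℝ) :
    (Fin d → ℝ≥0∞) →o (Fin d → ℝ≥0∞) where
  toFun v i := firstPassage (x i i) (level x r i v)
  monotone' _ _ h i := antitone_firstPassage _ (hx.antitone_level r i h)

lemma passageTimeMap_le (hx : MemE d x) {u : Fin d → ℝ≥0∞}
    (hu : ∀ i, u i ≠ ⊤ → ∑ j, preLimE (x i j) (u j) ≤ ((-(r i) : ℝ) : EReal)) :
    passageTimeMap hx r u ≤ u := by
  intro i
  by_cases hui : u i = ⊤
  · simp [hui]
  refine sInf_le (show preLimE (x i i) (u i) ≤ level x r i u from ?_)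
  rw [le_level_iff, ← sum_preLimE_eq_add_offDiagSum]
  exact hu i hui

lemma isSolution_of_passageTimeMap_eq (hx : MemE d x) (hr : ∀ i, 0 ≤ r i)
    {v : Fin d → ℝ≥0∞} (hv : passageTimeMap hx r v = v) : IsSolution d x r v := by
  intro i hvi
  have hfix : firstPassage (x i i) (level x r i v) = v i := congrFun hv i
  have hpass := hx.preLimE_firstPassage_eq i (hx.level_nonpos hr i v) (hfix ▸ hvi)
  rw [hfix] at hpass
  obtain ⟨c, hc⟩ := exists_preLimE_eq_coe (f := x i i) hvi
  have hrow : preLimE (x i i) (v i) + offDiagSum x i v = ((-(r i) : ℝ) : EReal) := by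
    refine le_antisymm (le_level_iff.1 hpass.le) ?_
    rw [hc] at hpass ⊢
    exact level_le_coe_iff.1 hpass.ge
  rw [sum_preLimE_eq_add_offDiagSum, hrow, ← EReal.coe_add, add_neg_cancel, EReal.coe_zero]

lemma IsSmallestSolution.le_of_forall_sum_le (hx : MemE d x) (hr : ∀ i, 0 ≤ r i)
    {s : Fin d → ℝ≥0∞} (hs : IsSmallestSolution d x r s) {u : Fin d → ℝ≥0∞}
    (hu : ∀ i, u i ≠ ⊤ → ∑ j, preLimE (x i j) (u j) ≤ ((-(r i) : ℝ) : EReal)) : s ≤ u :=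
  calc s ≤ (passageTimeMap hx r).lfp :=
        hs.2 _ (isSolution_of_passageTimeMap_eq hx hr (passageTimeMap hx r).map_lfp)
    _ ≤ u := OrderHom.lfp_le _ (passageTimeMap_le hx hu)

end System

theorem smallest_solution_comparison_general (d : ℕ)
    (x : Fin d → Fin d → ℝ → ℝ) (hx : MemE d x)
    (r : Fin d → ℝ) (hr : ∀ i, 0 ≤ r i)
    (s : Fin d → ℝ≥0∞) (hs : IsSmallestSolution d x r s) :
    (∀ u : Fin d → ℝ≥0∞,
        (∀ i, u i ≠ ⊤ → ∑ j, preLimE (x i j) (u j) ≤ (-(r i) : ℝ)) → s ≤ u) ∧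
    (∀ u : Fin d → ℝ≥0∞, (∀ i, u i ≠ ⊤) → u ≤ s → u ≠ s →
        ∃ i, ((-(r i) : ℝ) : EReal) < ∑ j, preLimE (x i j) (u j)) := by
  have hle : ∀ u : Fin d → ℝ≥0∞,
      (∀ i, u i ≠ ⊤ → ∑ j, preLimE (x i j) (u j) ≤ (-(r i) : ℝ)) → s ≤ u :=
    fun _ hu => hs.le_of_forall_sum_le hx hr hu
  refine ⟨hle, fun u _ hus hne => ?_⟩
  by_contra! hsub
  exact hne (le_antisymm hus (hle u fun i _ => hsub i))

/-- if `u ∈ [0,∞]^d` satisfies `∑_j x^{i,j}(u_j−) ≤ −r_i` for every `i` with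
`u_i < ∞`, then `u ≥ s`, where `s` is the smallest solution of `(r, x)`. Consequently, for
every finite `u < s` there is a coordinate `i` with `∑_j x^{i,j}(u_j−) > −r_i`. -/
theorem smallest_solution_comparison (d : ℕ) (hd : 1 ≤ d)
    (x : Fin d → Fin d → ℝ → ℝ) (hx : MemE d x)
    (r : Fin d → ℝ) (hr : ∀ i, 0 ≤ r i)
    (s : Fin d → ℝ≥0∞) (hs : IsSmallestSolution d x r s) :
    (∀ u : Fin d → ℝ≥0∞,
        (∀ i, u i ≠ ⊤ → ∑ j, preLimE (x i j) (u j) ≤ (-(r i) : ℝ)) → s ≤ u) ∧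
    (∀ u : Fin d → ℝ≥0∞, (∀ i, u i ≠ ⊤) → u ≤ s → u ≠ s →
        ∃ i, ((-(r i) : ℝ) : EReal) < ∑ j, preLimE (x i j) (u j)) :=
  smallest_solution_comparison_general d x hx r hr s hs
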